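/- Effective resistance on a finite connected graph satisfies the triangle inequality: for all vertices u, v, z, R(u ↔ v) ≤ R(u ↔ z) + R(z ↔ v). -/

import Mathlib

/-- Dirichlet energy of `f` on a graph with positive edge conductances `c`. -/
noncomputable def dirichletEnergyC {V : Type*} [Fintype V]
    (G : SimpleGraph V) [DecidableRel G.Adj] (c : V → V → ℝ) (f : V → ℝ) : ℝ :=
  (1 / 2) * ∑ u, ∑ v, if G.Adj u v then c u v * (f u - f v) ^ 2 else 0

/-- Effective resistance between `x` and `y` in the network on `G` with edge
conductances `c`, defined via the Dirichlet variational principle. -/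
noncomputable def effResC {V : Type*} [Fintype V]
    (G : SimpleGraph V) [DecidableRel G.Adj] (c : V → V → ℝ) (x y : V) : ℝ :=
  (sInf (dirichletEnergyC G c '' {f : V → ℝ | f x = 1 ∧ f y = 0}))⁻¹

namespace EffResAux

variable {V : Type*} [Fintype V] (G : SimpleGraph V) [DecidableRel G.Adj] (c : V → V → ℝ)

noncomputable def bform (f g : V → ℝ) : ℝ :=
  (1 / 2) * ∑ u, ∑ v, if G.Adj u v then c u v * (f u - f v) * (g u - g v) else 0

lemma bform_self (f : V → ℝ) : bform G c f f = dirichletEnergyC G c f := by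
  unfold bform dirichletEnergyC
  congr 1
  refine Finset.sum_congr rfl fun u _ => Finset.sum_congr rfl fun v _ => ?_
  split <;> ring

lemma energy_nonneg (hpos : ∀ u v, G.Adj u v → 0 < c u v) (f : V → ℝ) :
    0 ≤ dirichletEnergyC G c f := by
  unfold dirichletEnergyC
  refine mul_nonneg (by norm_num) (Finset.sum_nonneg fun u _ =>
    Finset.sum_nonneg fun v _ => ?_)
  split
  · exact mul_nonneg (hpos u v ‹_›).le (sq_nonneg _)
  · exact le_refl 0

lemma energy_comb (a b : ℝ) (f g : V → ℝ) :
    dirichletEnergyC G c (fun w => a * f w + b * g w)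
      = a ^ 2 * dirichletEnergyC G c f + 2 * a * b * bform G c f g
        + b ^ 2 * dirichletEnergyC G c g := by
  unfold bform dirichletEnergyC
  have key : ∀ u v : V,
      (if G.Adj u v then c u v * ((a * f u + b * g u) - (a * f v + b * g v)) ^ 2 else 0)
        = a ^ 2 * (if G.Adj u v then c u v * (f u - f v) ^ 2 else 0)
          + 2 * a * b * (if G.Adj u v then c u v * (f u - f v) * (g u - g v) else 0)
          + b ^ 2 * (if G.Adj u v then c u v * (g u - g v) ^ 2 else 0) := by
    intro u v; split <;> ring
  calc (1/2 : ℝ) * ∑ u, ∑ v, (if G.Adj u v then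
          c u v * ((a * f u + b * g u) - (a * f v + b * g v)) ^ 2 else 0)
      = (1/2 : ℝ) * ∑ u, ∑ v,
          (a ^ 2 * (if G.Adj u v then c u v * (f u - f v) ^ 2 else 0)
          + 2 * a * b * (if G.Adj u v then c u v * (f u - f v) * (g u - g v) else 0)
          + b ^ 2 * (if G.Adj u v then c u v * (g u - g v) ^ 2 else 0)) := by
        congr 1
        exact Finset.sum_congr rfl fun u _ => Finset.sum_congr rfl fun v _ => key u v
    _ = _ := by
        simp only [Finset.sum_add_distrib, ← Finset.mul_sum]
        ring

lemma bform_second (a b k : ℝ) (f g h : V → ℝ) :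
    bform G c f (fun w => a * g w + b * h w + k)
      = a * bform G c f g + b * bform G c f h := by
  unfold bform
  have key : ∀ u v : V,
      (if G.Adj u v then
          c u v * (f u - f v) * ((a * g u + b * h u + k) - (a * g v + b * h v + k)) else 0)
        = a * (if G.Adj u v then c u v * (f u - f v) * (g u - g v) else 0)
          + b * (if G.Adj u v then c u v * (f u - f v) * (h u - h v) else 0) := by
    intro u v; split <;> ring
  calc (1/2 : ℝ) * ∑ u, ∑ v, (if G.Adj u v then
          c u v * (f u - f v) * ((a * g u + b * h u + k) - (a * g v + b * h v + k)) else 0)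
      = (1/2 : ℝ) * ∑ u, ∑ v,
          (a * (if G.Adj u v then c u v * (f u - f v) * (g u - g v) else 0)
          + b * (if G.Adj u v then c u v * (f u - f v) * (h u - h v) else 0)) := by
        congr 1
        exact Finset.sum_congr rfl fun u _ => Finset.sum_congr rfl fun v _ => key u v
    _ = _ := by
        simp only [Finset.sum_add_distrib, ← Finset.mul_sum]
        ring

lemma bform_first (a b : ℝ) (f g h : V → ℝ) :
    bform G c (fun w => a * f w + b * g w) h
      = a * bform G c f h + b * bform G c g h := by
  unfold bform
  have key : ∀ u v : V,
      (if G.Adj u v then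
          c u v * ((a * f u + b * g u) - (a * f v + b * g v)) * (h u - h v) else 0)
        = a * (if G.Adj u v then c u v * (f u - f v) * (h u - h v) else 0)
          + b * (if G.Adj u v then c u v * (g u - g v) * (h u - h v) else 0) := by
    intro u v; split <;> ring
  calc (1/2 : ℝ) * ∑ u, ∑ v, (if G.Adj u v then
          c u v * ((a * f u + b * g u) - (a * f v + b * g v)) * (h u - h v) else 0)
      = (1/2 : ℝ) * ∑ u, ∑ v,
          (a * (if G.Adj u v then c u v * (f u - f v) * (h u - h v) else 0)
          + b * (if G.Adj u v then c u v * (g u - g v) * (h u - h v) else 0)) := by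
        congr 1
        exact Finset.sum_congr rfl fun u _ => Finset.sum_congr rfl fun v _ => key u v
    _ = _ := by
        simp only [Finset.sum_add_distrib, ← Finset.mul_sum]
        ring

lemma bform_sq_le (hpos : ∀ u v, G.Adj u v → 0 < c u v) (f g : V → ℝ) :
    bform G c f g ^ 2 ≤ dirichletEnergyC G c f * dirichletEnergyC G c g := by
  have h : ∀ t : ℝ, 0 ≤ dirichletEnergyC G c g * (t * t) + (2 * bform G c f g) * t
      + dirichletEnergyC G c f := by
    intro t
    have h2 := energy_nonneg G c hpos (fun w => 1 * f w + t * g w)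
    rw [energy_comb] at h2
    nlinarith [h2]
  have h3 : discrim (dirichletEnergyC G c g) (2 * bform G c f g) (dirichletEnergyC G c f) ≤ 0 :=
    discrim_le_zero h
  unfold discrim at h3
  nlinarith [h3]

end EffResAux

namespace EffResAux

variable {V : Type*} [Fintype V] (G : SimpleGraph V) [DecidableRel G.Adj] (c : V → V → ℝ)

/-- Clamping to `[0,1]` does not increase energy. -/
lemma energy_clamp_le (hpos : ∀ u v, G.Adj u v → 0 < c u v) (f : V → ℝ) :
    dirichletEnergyC G c (fun w => max 0 (min 1 (f w))) ≤ dirichletEnergyC G c f := by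
  unfold dirichletEnergyC
  refine mul_le_mul_of_nonneg_left (Finset.sum_le_sum fun u _ =>
    Finset.sum_le_sum fun v _ => ?_) (by norm_num)
  split
  · refine mul_le_mul_of_nonneg_left ?_ (hpos u v ‹_›).le
    have habs : |max 0 (min 1 (f u)) - max 0 (min 1 (f v))| ≤ |f u - f v| := by
      calc |max 0 (min 1 (f u)) - max 0 (min 1 (f v))| ≤ |min 1 (f u) - min 1 (f v)| := by
            rw [max_comm 0 (min 1 (f u)), max_comm 0 (min 1 (f v))]
            exact abs_max_sub_max_le_abs _ _ _
        _ ≤ |f u - f v| := by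
            refine (abs_min_sub_min_le_max 1 (f u) 1 (f v)).trans ?_
            simp
    calc (max 0 (min 1 (f u)) - max 0 (min 1 (f v))) ^ 2
        = |max 0 (min 1 (f u)) - max 0 (min 1 (f v))| ^ 2 := (sq_abs _).symm
      _ ≤ |f u - f v| ^ 2 := pow_le_pow_left₀ (abs_nonneg _) habs 2
      _ = (f u - f v) ^ 2 := sq_abs _
  · exact le_refl 0

lemma energy_continuous : Continuous fun f : V → ℝ => dirichletEnergyC G c f := by
  unfold dirichletEnergyC
  refine continuous_const.mul (continuous_finset_sum _ fun u _ =>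
    continuous_finset_sum _ fun v _ => ?_)
  split
  · exact continuous_const.mul (((continuous_apply u).sub (continuous_apply v)).pow 2)
  · exact continuous_const

/-- Existence of an energy minimizer with values in `[0,1]`. -/
lemma exists_minimizer [DecidableEq V] (hpos : ∀ u v, G.Adj u v → 0 < c u v)
    {x y : V} (hxy : x ≠ y) :
    ∃ g : V → ℝ, g x = 1 ∧ g y = 0 ∧ (∀ w, g w ∈ Set.Icc (0:ℝ) 1) ∧
      ∀ f : V → ℝ, f x = 1 → f y = 0 →
        dirichletEnergyC G c g ≤ dirichletEnergyC G c f := by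
  set K : Set (V → ℝ) :=
    {f | f x = 1} ∩ ({f | f y = 0} ∩ Set.pi Set.univ fun _ => Set.Icc (0:ℝ) 1) with hK
  have hKcl : IsClosed K :=
    ((isClosed_eq (continuous_apply x) continuous_const).inter
      ((isClosed_eq (continuous_apply y) continuous_const).inter
        (isClosed_set_pi fun i _ => isClosed_Icc)))
  have hKcpt : IsCompact K :=
    (isCompact_univ_pi fun _ : V => isCompact_Icc).of_isClosed_subset hKcl
      fun f hf => fun i _ => hf.2.2 i (Set.mem_univ i)
  have hKne : K.Nonempty := by
    exact ⟨fun w => if w = x then 1 else 0, if_pos rfl, if_neg (fun h => hxy h.symm),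
      fun w _ => by dsimp only; split <;> norm_num⟩
  obtain ⟨g, hgK, hgmin⟩ := hKcpt.exists_isMinOn hKne (energy_continuous G c).continuousOn
  refine ⟨g, hgK.1, hgK.2.1, fun w => hgK.2.2 w (Set.mem_univ w), ?_⟩
  intro f hf1 hf2
  have hf' : (fun w => max 0 (min 1 (f w))) ∈ K := by
    refine ⟨by simp [hf1], by simp [hf2], fun w _ => ?_⟩
    constructor
    · exact le_max_left 0 _
    · exact max_le (by norm_num) (min_le_left 1 _)
  exact (hgmin hf').trans (energy_clamp_le G c hpos f)

end EffResAux

namespace EffResAux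

variable {V : Type*} [Fintype V] (G : SimpleGraph V) [DecidableRel G.Adj] (c : V → V → ℝ)

/-- Euler–Lagrange: a minimizer is orthogonal to variations vanishing at `x, y`. -/
lemma bform_min_zero (hpos : ∀ u v, G.Adj u v → 0 < c u v) {x y : V} {g : V → ℝ}
    (hgx : g x = 1) (hgy : g y = 0)
    (hmin : ∀ f : V → ℝ, f x = 1 → f y = 0 →
      dirichletEnergyC G c g ≤ dirichletEnergyC G c f)
    {φ : V → ℝ} (hφx : φ x = 0) (hφy : φ y = 0) : bform G c g φ = 0 := by
  have h : ∀ t : ℝ, 0 ≤ dirichletEnergyC G c φ * (t * t) + (2 * bform G c g φ) * t + 0 := by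
    intro t
    have h1 := hmin (fun w => 1 * g w + t * φ w) (by simp [hgx, hφx]) (by simp [hgy, hφy])
    rw [energy_comb] at h1
    nlinarith [h1]
  have h3 : discrim (dirichletEnergyC G c φ) (2 * bform G c g φ) 0 ≤ 0 := discrim_le_zero h
  unfold discrim at h3
  have h4 : bform G c g φ ^ 2 = 0 :=
    le_antisymm (by nlinarith [h3]) (sq_nonneg _)
  exact sq_eq_zero_iff.mp h4

/-- The key identity `B(g, ψ) = E(g) * (ψ x - ψ y)` for a minimizer `g`. -/
lemma bform_min (hpos : ∀ u v, G.Adj u v → 0 < c u v) {x y : V} {g : V → ℝ}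
    (hgx : g x = 1) (hgy : g y = 0)
    (hmin : ∀ f : V → ℝ, f x = 1 → f y = 0 →
      dirichletEnergyC G c g ≤ dirichletEnergyC G c f) (ψ : V → ℝ) :
    bform G c g ψ = dirichletEnergyC G c g * (ψ x - ψ y) := by
  have hφ : bform G c g (fun w => 1 * ψ w + (-(ψ x - ψ y)) * g w + (-(ψ y))) = 0 := by
    refine bform_min_zero G c hpos hgx hgy hmin ?_ ?_
    · rw [hgx]; ring
    · rw [hgy]; ring
  rw [bform_second] at hφ
  rw [bform_self] at hφ
  linarith [hφ]

lemma walk_const {g : V → ℝ} (hadj : ∀ a b, G.Adj a b → g a = g b) {a b : V}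
    (h : G.Reachable a b) : g a = g b := by
  obtain ⟨w⟩ := h
  induction w with
  | nil => rfl
  | cons h p ih => rw [hadj _ _ h]; exact ih

/-- Positivity of the minimal energy on a connected graph. -/
lemma energy_pos (hconn : G.Connected) (hpos : ∀ u v, G.Adj u v → 0 < c u v)
    {x y : V} (hxy : x ≠ y) {g : V → ℝ} (hgx : g x = 1) (hgy : g y = 0) :
    0 < dirichletEnergyC G c g := by
  rcases (energy_nonneg G c hpos g).lt_or_eq with h | h
  · exact h
  exfalso
  have hsum : ∑ u, ∑ v, (if G.Adj u v then c u v * (g u - g v) ^ 2 else 0) = 0 := by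
    unfold dirichletEnergyC at h
    linarith [h.symm]
  have tnn : ∀ u v : V, 0 ≤ (if G.Adj u v then c u v * (g u - g v) ^ 2 else 0) := by
    intro u v; split
    · exact mul_nonneg (hpos u v ‹_›).le (sq_nonneg _)
    · exact le_refl 0
  have hterm : ∀ u v : V, (if G.Adj u v then c u v * (g u - g v) ^ 2 else 0) = 0 := by
    have houter := (Finset.sum_eq_zero_iff_of_nonneg (fun u _ =>
      Finset.sum_nonneg fun v _ => tnn u v)).mp hsum
    intro u v
    exact (Finset.sum_eq_zero_iff_of_nonneg fun v _ => tnn u v).mp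
      (houter u (Finset.mem_univ u)) v (Finset.mem_univ v)
  have hadj : ∀ a b, G.Adj a b → g a = g b := by
    intro a b hab
    have := hterm a b
    rw [if_pos hab] at this
    have hc := hpos a b hab
    have : (g a - g b) ^ 2 = 0 := by
      rcases mul_eq_zero.mp this with h' | h'
      · exact absurd h' hc.ne'
      · exact h'
    have := sq_eq_zero_iff.mp this
    linarith [this]
  have := walk_const G (hadj) (hconn.preconnected x y)
  rw [hgx, hgy] at this
  norm_num at this

end EffResAux

namespace EffResAux

variable {V : Type*} [Fintype V] (G : SimpleGraph V) [DecidableRel G.Adj] (c : V → V → ℝ)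

lemma sInf_eq_min (hpos : ∀ u v, G.Adj u v → 0 < c u v) {x y : V} {g : V → ℝ}
    (hgx : g x = 1) (hgy : g y = 0)
    (hmin : ∀ f : V → ℝ, f x = 1 → f y = 0 →
      dirichletEnergyC G c g ≤ dirichletEnergyC G c f) :
    sInf (dirichletEnergyC G c '' {f : V → ℝ | f x = 1 ∧ f y = 0})
      = dirichletEnergyC G c g := by
  apply le_antisymm
  · refine csInf_le ⟨0, ?_⟩ ⟨g, ⟨hgx, hgy⟩, rfl⟩
    rintro _ ⟨f, _, rfl⟩
    exact energy_nonneg G c hpos f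
  · refine le_csInf ⟨_, ⟨g, ⟨hgx, hgy⟩, rfl⟩⟩ ?_
    rintro _ ⟨f, ⟨h1, h2⟩, rfl⟩
    exact hmin f h1 h2

lemma effResC_self (x : V) : effResC G c x x = 0 := by
  unfold effResC
  have : {f : V → ℝ | f x = 1 ∧ f x = 0} = ∅ := by
    ext f
    simp only [Set.mem_setOf_eq, Set.mem_empty_iff_false, iff_false, not_and]
    intro h1 h2
    rw [h1] at h2; norm_num at h2
  rw [this]
  simp [Real.sInf_empty]

lemma effResC_nonneg (hpos : ∀ u v, G.Adj u v → 0 < c u v) (x y : V) :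
    0 ≤ effResC G c x y := by
  unfold effResC
  refine inv_nonneg.mpr (Real.sInf_nonneg ?_)
  rintro _ ⟨f, _, rfl⟩
  exact energy_nonneg G c hpos f

end EffResAux


open EffResAux in
/-- Effective resistance on a finite connected graph with positive edge
conductances satisfies the triangle inequality:
`R(u ↔ v) ≤ R(u ↔ z) + R(z ↔ v)`. -/
theorem effRes_triangle
    {V : Type*} [Fintype V] [DecidableEq V] [Nonempty V]
    (G : SimpleGraph V) [DecidableRel G.Adj] (hconn : G.Connected)
    (c : V → V → ℝ)
    (hsymm : ∀ u v, c u v = c v u)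
    (hpos : ∀ u v, G.Adj u v → 0 < c u v) :
    ∀ u v z : V, effResC G c u v ≤ effResC G c u z + effResC G c z v := by
  intro u v z
  by_cases huz : u = z
  · rw [huz, effResC_self, zero_add]
  by_cases hzv : z = v
  · rw [hzv, effResC_self, add_zero]
  by_cases huv : u = v
  · rw [huv, effResC_self]
    exact add_nonneg (effResC_nonneg G c hpos v z) (effResC_nonneg G c hpos z v)
  -- main case
  obtain ⟨g₁, hg₁x, hg₁y, hg₁I, hg₁min⟩ := exists_minimizer G c hpos huz
  obtain ⟨g₂, hg₂x, hg₂y, hg₂I, hg₂min⟩ := exists_minimizer G c hpos hzv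
  set C1 := dirichletEnergyC G c g₁ with hC1
  set C2 := dirichletEnergyC G c g₂ with hC2
  have hC1pos : 0 < C1 := energy_pos G c hconn hpos huz hg₁x hg₁y
  have hC2pos : 0 < C2 := energy_pos G c hconn hpos hzv hg₂x hg₂y
  have hRuz : effResC G c u z = C1⁻¹ := by
    unfold effResC; rw [sInf_eq_min G c hpos hg₁x hg₁y hg₁min]
  have hRzv : effResC G c z v = C2⁻¹ := by
    unfold effResC; rw [sInf_eq_min G c hpos hg₂x hg₂y hg₂min]
  set h : V → ℝ := fun w => C1⁻¹ * g₁ w + C2⁻¹ * g₂ w with hh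
  -- energy of h
  have hB12 : bform G c g₁ g₂ = C1 * (g₂ u - 1) := by
    rw [bform_min G c hpos hg₁x hg₁y hg₁min g₂, hg₂x]
  have hEh : dirichletEnergyC G c h ≤ C1⁻¹ + C2⁻¹ := by
    rw [hh, energy_comb, hB12, ← hC1, ← hC2]
    have hg2u : g₂ u ≤ 1 := (hg₂I u).2
    have e1 : C1⁻¹ ^ 2 * C1 = C1⁻¹ := by field_simp
    have e2 : C2⁻¹ ^ 2 * C2 = C2⁻¹ := by field_simp
    rw [e1, e2]
    have : 2 * C1⁻¹ * C2⁻¹ * (C1 * (g₂ u - 1)) ≤ 0 := by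
      have : C1⁻¹ * C2⁻¹ * C1 ≥ 0 := by positivity
      nlinarith
    linarith
  -- lower bound on the energy of any test function for (u, v)
  have hlb : ∀ ψ : V → ℝ, ψ u = 1 → ψ v = 0 →
      (C1⁻¹ + C2⁻¹)⁻¹ ≤ dirichletEnergyC G c ψ := by
    intro ψ hψu hψv
    have hBhψ : bform G c h ψ = 1 := by
      rw [hh, bform_first, bform_min G c hpos hg₁x hg₁y hg₁min ψ,
        bform_min G c hpos hg₂x hg₂y hg₂min ψ, ← hC1, ← hC2, hψu, hψv]
      field_simp
      ring
    have hcs := bform_sq_le G c hpos h ψ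
    rw [hBhψ] at hcs
    have hEψ : 0 ≤ dirichletEnergyC G c ψ := energy_nonneg G c hpos ψ
    have h1 : (1:ℝ) ≤ (C1⁻¹ + C2⁻¹) * dirichletEnergyC G c ψ := by
      calc (1:ℝ) = 1 ^ 2 := by norm_num
        _ ≤ dirichletEnergyC G c h * dirichletEnergyC G c ψ := hcs
        _ ≤ (C1⁻¹ + C2⁻¹) * dirichletEnergyC G c ψ :=
            mul_le_mul_of_nonneg_right hEh hEψ
    have hsumpos : 0 < C1⁻¹ + C2⁻¹ := by positivity
    rw [inv_le_iff_one_le_mul₀ hsumpos]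
    nlinarith [h1]
  -- conclude
  have hSlb : (C1⁻¹ + C2⁻¹)⁻¹
      ≤ sInf (dirichletEnergyC G c '' {f : V → ℝ | f u = 1 ∧ f v = 0}) := by
    refine le_csInf ⟨_, ⟨fun w => if w = u then 1 else 0, ⟨if_pos rfl,
      if_neg fun hw => huv hw.symm⟩, rfl⟩⟩ ?_
    rintro _ ⟨f, ⟨h1, h2⟩, rfl⟩
    exact hlb f h1 h2
  have hsumpos : 0 < C1⁻¹ + C2⁻¹ := by positivity
  rw [hRuz, hRzv]
  unfold effResC
  calc (sInf (dirichletEnergyC G c '' {f : V → ℝ | f u = 1 ∧ f v = 0}))⁻¹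
      ≤ ((C1⁻¹ + C2⁻¹)⁻¹)⁻¹ := inv_anti₀ (by positivity) hSlb
    _ = C1⁻¹ + C2⁻¹ := inv_inv _
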